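/- arXiv:0904.2306 — 2 statements merged into one kernel-verified Lean document; each statement's English description precedes it below -/
import Mathlib

section
/- For every finite simple directed graph G(V,E) in which every vertex has positive indegree, there exists a set S ⊆ V with c(S, G, φ^simple) = V and |S| ≤ ⌊|V|/2⌋; that is, the minimum size of an irreversible dynamo of G under the simple-majority scenario is at most ⌊|V|/2⌋. -/
/-!
Fix any linear order of the vertices. Seed every vertex that is not majority-dominated by its
in-neighbours that come earlier; processing vertices in order then colours everything. Doing
the same with the reversed order gives a second dynamo, and a vertex cannot be seeded in both:
having no loop, its in-neighbours split into earlier and later ones, and both halves cannot be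
strict minorities. Two disjoint dynamos leave one of size at most `⌊|V|/2⌋`.
-/

/-- The set of in-neighbors of `v` in the directed graph with adjacency
relation `A` (`A u v` means there is an edge from `u` to `v`). -/
def inNbr {V : Type*} (A : V → V → Prop) (v : V) : Set V := {u | A u v}

/-- `dClosure A ok S` is the least superset of `S` closed under the coloring
rule: a vertex `v` gets colored white as soon as the number `n` of its white
in-neighbors satisfies the threshold condition `ok v n`. -/
def dClosure {V : Type*} (A : V → V → Prop) (ok : V → ℕ → Prop) (S : Set V) : Set V :=
  ⋂₀ {T : Set V | S ⊆ T ∧ ∀ v, ok v ((inNbr A v ∩ T).ncard) → v ∈ T}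

/-- The simple-majority threshold `φ^simple(v) = ⌈deg^in(v)/2⌉`:
`v` is colored white when at least half of its in-neighbors are white,
i.e. `deg^in(v) ≤ 2·n`. -/
def simpleOk {V : Type*} (A : V → V → Prop) (v : V) (n : ℕ) : Prop :=
  (inNbr A v).ncard ≤ 2 * n

open Set

section

variable {V : Type*} (A : V → V → Prop)

theorem subset_dClosure (ok : V → ℕ → Prop) (S : Set V) : S ⊆ dClosure A ok S :=
  fun _ hx _ hT => hT.1 hx

theorem mem_dClosure_of_ok [Finite V] {ok : V → ℕ → Prop} {S : Set V} {v : V}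
    (hok : Monotone (ok v)) (hv : ok v (inNbr A v ∩ dClosure A ok S).ncard) :
    v ∈ dClosure A ok S := by
  intro T hT
  refine hT.2 v (hok (ncard_le_ncard ?_) hv)
  exact inter_subset_inter_right _ fun _ hu => hu T hT

theorem simpleOk_monotone (v : V) : Monotone (simpleOk A v) :=
  fun _ _ hmn h => h.trans (Nat.mul_le_mul_left 2 hmn)

def seedSet {α : Type*} [LT α] (ok : V → ℕ → Prop) (f : V → α) : Set V :=
  {v | ¬ ok v (inNbr A v ∩ {u | f u < f v}).ncard}

theorem dClosure_seedSet_eq_univ [Finite V] {α : Type*} [Preorder α] [WellFoundedLT α]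
    {ok : V → ℕ → Prop} (hok : ∀ v, Monotone (ok v)) (f : V → α) :
    dClosure A ok (seedSet A ok f) = univ := by
  refine eq_univ_of_forall fun v => ?_
  induction v using (InvImage.wf f wellFounded_lt).induction with
  | _ v ih =>
    by_cases hv : v ∈ seedSet A ok f
    · exact subset_dClosure A ok _ hv
    · refine mem_dClosure_of_ok A (hok v) (hok v (ncard_le_ncard ?_) (not_not.mp hv))
      exact inter_subset_inter_right _ fun u hu => ih u hu

theorem ncard_inNbr_lt_add_ncard_inNbr_gt [Finite V] {α : Type*} [LinearOrder α]
    (hirrefl : ∀ v, ¬ A v v) {f : V → α} (hf : Function.Injective f) (v : V) :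
    (inNbr A v ∩ {u | f u < f v}).ncard + (inNbr A v ∩ {u | f v < f u}).ncard =
      (inNbr A v).ncard := by
  rw [← ncard_union_eq, ← inter_union_distrib_left, inter_eq_left.mpr]
  · intro u hu
    have hne : f u ≠ f v := fun h => hirrefl v (hf h ▸ hu)
    exact hne.lt_or_gt
  · exact disjoint_left.mpr fun u hu hu' => lt_asymm hu.2 hu'.2

theorem disjoint_seedSet_toDual [Finite V] {α : Type*} [LinearOrder α]
    (hirrefl : ∀ v, ¬ A v v) {f : V → α} (hf : Function.Injective f) :
    Disjoint (seedSet A (simpleOk A) f) (seedSet A (simpleOk A) (OrderDual.toDual ∘ f)) := by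
  refine disjoint_left.mpr fun v hv hv' => ?_
  have hsplit := ncard_inNbr_lt_add_ncard_inNbr_gt A hirrefl hf v
  simp only [seedSet, simpleOk, Function.comp_apply, OrderDual.toDual_lt_toDual, mem_ofPred_eq,
    not_le] at hv hv'
  omega

end

theorem stmt3_general {V : Type*} [Fintype V] (A : V → V → Prop)
    (hsimple : ∀ v, ¬ A v v) :
    ∃ S : Set V, dClosure A (simpleOk A) S = Set.univ ∧
      S.ncard ≤ Fintype.card V / 2 := by
  set f := Fintype.equivFin V
  set S := seedSet A (simpleOk A) f
  set T := seedSet A (simpleOk A) (OrderDual.toDual ∘ f)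
  have hsum : S.ncard + T.ncard ≤ Fintype.card V := by
    rw [← ncard_union_eq (disjoint_seedSet_toDual A hsimple f.injective)]
    exact (ncard_le_card _).trans_eq Nat.card_eq_fintype_card
  rcases le_total S.ncard T.ncard with h | h
  · exact ⟨S, dClosure_seedSet_eq_univ A (simpleOk_monotone A) _, by omega⟩
  · exact ⟨T, dClosure_seedSet_eq_univ A (simpleOk_monotone A) _, by omega⟩

/-- Theorem: every finite digraph with positive indegrees has an irreversible
dynamo of size at most `⌊|V|/2⌋` under the simple-majority scenario. -/
theorem stmt3 {V : Type*} [Fintype V] (A : V → V → Prop)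
    (hsimple : ∀ v, ¬ A v v) (hindeg : ∀ v : V, ∃ u, A u v) :
    ∃ S : Set V, dClosure A (simpleOk A) S = Set.univ ∧
      S.ncard ≤ Fintype.card V / 2 :=
  stmt3_general A hsimple
end

section
/- Let G(V,E) be a finite simple undirected connected graph, (S, V\S) a proper cut, v ∈ S, and let Ḡ(V̄,Ē) be the connected component of G[(V\S) ∪ {v}] that contains v. Then B((V\S) ∪ {v}) ⊆ B(V\S) ∪ {Ḡ}; that is, every bad connected component of G[(V\S)∪{v}] with respect to the cut (S\{v}, (V\S)∪{v}) is either Ḡ or a bad connected component of G[V\S] with respect to (S, V\S). -/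
/-! A component of `G[(V\S) ∪ {v}]` that misses `v` lies in `V\S` and has no vertex adjacent
to `v`. Hence it is already a component of `G[V\S]`, and each of its vertices has the same
neighbours on either side of the cut `((V\S) ∪ {v}, S\{v})` as of `(V\S, S)`. -/

/-- The size `e(S, V\S)` of the cut `(S, V\S)`: the number of edges of `G`
with one endpoint in `S` and the other outside `S` (each such edge is counted
once, as the ordered pair whose first coordinate lies in `S`). -/
noncomputable def cutE {V : Type*} (G : SimpleGraph V) (S : Set V) : ℕ :=
  {p : V × V | G.Adj p.1 p.2 ∧ p.1 ∈ S ∧ p.2 ∉ S}.ncard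

/-- `v` is bad with respect to the cut `(S, V\S)`:
`|N(v) ∩ S| = |N(v) \ S|`. -/
def badVtx {V : Type*} (G : SimpleGraph V) (S : Set V) (v : V) : Prop :=
  (G.neighborSet v ∩ S).ncard = (G.neighborSet v \ S).ncard

/-- The cut `(S, V\S)` is proper: no vertex has more neighbors on its own side
than on the other side. -/
def properCut {V : Type*} (G : SimpleGraph V) (S : Set V) : Prop :=
  (∀ v ∈ S, (G.neighborSet v ∩ S).ncard ≤ (G.neighborSet v \ S).ncard) ∧
  (∀ v ∉ S, (G.neighborSet v \ S).ncard ≤ (G.neighborSet v ∩ S).ncard)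

/-- The vertex sets of the connected components of the induced subgraph `G[S]`,
viewed as subsets of `V`. -/
def comps {V : Type*} (G : SimpleGraph V) (S : Set V) : Set (Set V) :=
  {C | ∃ c : (G.induce S).ConnectedComponent, C = Subtype.val '' c.supp}

/-- `badComps G S` is `B(S)`: the set of connected components of `G[S]` all of
whose vertices are bad with respect to the cut `(S, V\S)`. -/
def badComps {V : Type*} (G : SimpleGraph V) (S : Set V) : Set (Set V) :=
  {C | C ∈ comps G S ∧ ∀ v ∈ C, badVtx G S v}

/-- `dSet G v U = d(v, U) = min_{u ∈ U} d(v, u)`. -/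
noncomputable def dSet {V : Type*} (G : SimpleGraph V) (v : V) (U : Set V) : ℕ :=
  sInf ((G.dist v) '' U)

/-- The potential `ψ(S, v*) = e(S, V\S)·|V|² −
[Σ_{Ĥ ∈ B(S)} d(v*, V̂) + Σ_{Ĥ ∈ B(V\S)} d(v*, V̂)]`. -/
noncomputable def psi {V : Type*} [Fintype V] (G : SimpleGraph V) (S : Set V) (vs : V) : ℤ :=
  (cutE G S : ℤ) * (Fintype.card V : ℤ) ^ 2
    - ((∑ᶠ C ∈ badComps G S, (dSet G vs C : ℤ))
      + ∑ᶠ C ∈ badComps G Sᶜ, (dSet G vs C : ℤ))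

open SimpleGraph

section

variable {V : Type*} {G : SimpleGraph V}

lemma subset_of_mem_comps {T C : Set V} (hC : C ∈ comps G T) : C ⊆ T := by
  obtain ⟨c, rfl⟩ := hC
  rintro _ ⟨x, -, rfl⟩
  exact x.2

lemma mem_comps_of_adj {T C : Set V} (hC : C ∈ comps G T) {x y : V} (hx : x ∈ C)
    (hy : y ∈ T) (hxy : G.Adj x y) : y ∈ C := by
  obtain ⟨c, rfl⟩ := hC
  obtain ⟨x, hxc, rfl⟩ := hx
  exact ⟨⟨y, hy⟩, c.mem_supp_of_adj_mem_supp hxc hxy, rfl⟩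

lemma eq_of_mem_comps {T C D : Set V} (hC : C ∈ comps G T) (hD : D ∈ comps G T) {v : V}
    (hvC : v ∈ C) (hvD : v ∈ D) : C = D := by
  obtain ⟨c, rfl⟩ := hC
  obtain ⟨d, rfl⟩ := hD
  obtain ⟨x, hxc, rfl⟩ := hvC
  obtain ⟨y, hyd, hyx⟩ := hvD
  rw [ConnectedComponent.eq_of_common_vertex hxc (Subtype.ext hyx ▸ hyd)]

lemma mem_comps_of_subset {A T C : Set V} (hAT : A ⊆ T) (hC : C ∈ comps G T) (hCA : C ⊆ A) :
    C ∈ comps G A := by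
  classical
  obtain ⟨c, rfl⟩ := hC
  obtain ⟨x, hx⟩ := c.nonempty_supp
  have hxA : (x : V) ∈ A := hCA ⟨x, hx, rfl⟩
  refine ⟨(G.induce A).connectedComponentMk ⟨x, hxA⟩, Set.ext fun y => ⟨?_, ?_⟩⟩
  · rintro ⟨y, hy, rfl⟩
    obtain ⟨w⟩ := c.reachable_of_mem_supp hx hy
    have hw : ∀ z ∈ (w.map (Embedding.induce T).toHom).support, z ∈ A := by
      simp only [Walk.support_map, List.mem_map]
      rintro _ ⟨z, hz, rfl⟩
      exact hCA ⟨z, c.mem_supp_iff z |>.2 <|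
        (ConnectedComponent.sound (w.takeUntil z hz).reachable).symm.trans hx, rfl⟩
    exact ⟨_, ConnectedComponent.sound ((w.map _).induce A hw).reachable.symm, rfl⟩
  · rintro ⟨y, hy, rfl⟩
    obtain ⟨w⟩ := ConnectedComponent.exact hy
    refine ⟨Set.inclusion hAT y, ?_, rfl⟩
    exact (ConnectedComponent.sound (w.map (G.induceHomOfLE hAT).toHom).reachable).trans hx

lemma badVtx_union_singleton_iff_of_not_adj {A : Set V} {u v : V} (huv : ¬ G.Adj u v) :
    badVtx G (A ∪ {v}) u ↔ badVtx G A u := by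
  have hinter : G.neighborSet u ∩ (A ∪ {v}) = G.neighborSet u ∩ A := by
    have hv : v ∉ G.neighborSet u := huv
    rw [Set.inter_union_distrib_left, Set.inter_singleton_eq_empty.2 hv, Set.union_empty]
  have hdiff : G.neighborSet u \ (A ∪ {v}) = G.neighborSet u \ A := by
    rw [← Set.sdiff_self_inter, hinter, Set.sdiff_self_inter]
  rw [badVtx, badVtx, hinter, hdiff]

end

theorem stmt11_general {V : Type*} (G : SimpleGraph V)
    (S : Set V) (v : V)
    (VBar : Set V) (hVBar : VBar ∈ comps G (Sᶜ ∪ {v})) (hvBar : v ∈ VBar) :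
    badComps G (Sᶜ ∪ {v}) ⊆ badComps G Sᶜ ∪ {VBar} := by
  rintro C ⟨hC, hbad⟩
  by_cases hvC : v ∈ C
  · exact Or.inr (eq_of_mem_comps hC hVBar hvC hvBar)
  · have hCS : C ⊆ Sᶜ := fun u hu =>
      (subset_of_mem_comps hC hu).resolve_right (ne_of_mem_of_not_mem hu hvC)
    refine Or.inl ⟨mem_comps_of_subset Set.subset_union_left hC hCS, fun u hu => ?_⟩
    have huv : ¬ G.Adj u v := fun h => hvC (mem_comps_of_adj hC hu (Or.inr rfl) h)
    exact (badVtx_union_singleton_iff_of_not_adj huv).1 (hbad u hu)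

/-- Lemma: for a proper cut `(S, V\S)` and `v ∈ S`, every bad connected
component of `G[(V\S)∪{v}]` (w.r.t. the cut `(S\{v}, (V\S)∪{v})`) is either
the component `Ḡ(V̄,Ē)` containing `v` or a bad component of `G[V\S]`
(w.r.t. `(S, V\S)`). -/
theorem stmt11 {V : Type*} [Fintype V] (G : SimpleGraph V) (hconn : G.Connected)
    (S : Set V) (hproper : properCut G S) (v : V) (hv : v ∈ S)
    (VBar : Set V) (hVBar : VBar ∈ comps G (Sᶜ ∪ {v})) (hvBar : v ∈ VBar) :
    badComps G (Sᶜ ∪ {v}) ⊆ badComps G Sᶜ ∪ {VBar} :=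
  stmt11_general G S v VBar hVBar hvBar
end
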